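/- For every real α > 0 and all real x, y with -1 ≤ y ≤ x ≤ 1, the Green function identity for killed Brownian motion on (-1,1) holds: sinh((1-x)·√(2α)) · sinh((1+y)·√(2α)) / ( √(2α) · sinh(2·√(2α)) ) = (1/2) · ∑_{n=1}^∞ (1/(α + n²π²/8)) · sin(nπ(x+1)/2) · sin(nπ(y+1)/2). -/

import Mathlib

/-!
For `s ≠ 0` the `T`-periodic extension of `t ↦ cosh (s (t - T/2))` from `[0, T]` is continuous, and
a single explicit antiderivative gives its Fourier coefficients
`2 s sinh (sT/2) / (T (s² + (2πk/T)²))`. These are summable, so the Fourier series converges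
pointwise to the function, and as the coefficients are even it is a cosine series. With `T = 2L`,
evaluating it at `x - y` and at `x + y` and subtracting, `cos (a - b) - cos (a + b) = 2 sin a sin b`
and its hyperbolic analogue turn the difference into the sine series of the Green function
`sinh (s (L - x)) sinh (s y) / (s sinh (sL))` of `s² - d²/dx²` on `[0, L]` with Dirichlet
conditions. The theorem is the case `L = 2`, `s = √(2α)`, after the shift `x ↦ x + 1`.
-/

open Real
open scoped Complex

theorem hasDerivAt_cexp_mul_cosh_primitive (β s c z : ℂ) :
    HasDerivAt
      (fun z => cexp (β * z) * (β * Complex.cosh (s * (z - c)) - s * Complex.sinh (s * (z - c))))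
      (cexp (β * z) * Complex.cosh (s * (z - c)) * (β ^ 2 - s ^ 2)) z := by
  have hlin : HasDerivAt (fun z => s * (z - c)) s z := by
    simpa using ((hasDerivAt_id z).sub_const c).const_mul s
  refine (((hasDerivAt_id z).const_mul β).cexp.fun_mul
    ((hlin.ccosh.const_mul β).fun_sub (hlin.csinh.const_mul s))).congr_deriv ?_
  simp only [id, mul_one]
  ring

theorem integral_cexp_mul_cosh {β s : ℂ} (h : β ^ 2 ≠ s ^ 2) (T : ℝ) :
    ∫ t in (0 : ℝ)..T, cexp (β * t) * Complex.cosh (s * (t - T / 2)) =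
      (cexp (β * T) * (β * Complex.cosh (s * (T / 2)) - s * Complex.sinh (s * (T / 2)))
        - (β * Complex.cosh (s * (T / 2)) + s * Complex.sinh (s * (T / 2)))) / (β ^ 2 - s ^ 2) := by
  have hcont : Continuous fun t : ℝ => cexp (β * t) * Complex.cosh (s * (t - T / 2)) := by
    fun_prop
  rw [eq_div_iff (sub_ne_zero.mpr h), ← intervalIntegral.integral_mul_const,
    intervalIntegral.integral_eq_sub_of_hasDerivAt
      (fun t _ => (hasDerivAt_cexp_mul_cosh_primitive β s (T / 2) t).comp_ofReal)
      ((hcont.mul continuous_const).intervalIntegrable _ _)]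
  simp only [Complex.ofReal_zero, mul_zero, Complex.exp_zero, one_mul, zero_sub, mul_neg,
    Complex.cosh_neg, Complex.sinh_neg, sub_neg_eq_add, sub_half]

noncomputable def periodicCosh (T : ℝ) [Fact (0 < T)] (s : ℝ) : AddCircle T → ℂ :=
  AddCircle.liftIco T 0 fun t => (cosh (s * (t - T / 2)) : ℂ)

noncomputable def coshFourierCoeff (T s : ℝ) (k : ℤ) : ℝ :=
  2 * s * sinh (s * T / 2) / (T * (s ^ 2 + (2 * π * k / T) ^ 2))

theorem continuous_periodicCosh (T : ℝ) [Fact (0 < T)] (s : ℝ) :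
    Continuous (periodicCosh T s) :=
  AddCircle.liftIco_continuous (by rw [zero_add, zero_sub, mul_neg, cosh_neg, sub_half])
    (by fun_prop)

theorem periodicCosh_coe {T : ℝ} [Fact (0 < T)] (s : ℝ) {t : ℝ} (ht : t ∈ Set.Icc 0 T) :
    periodicCosh T s t = cosh (s * (t - T / 2)) := by
  rcases ht.2.lt_or_eq with hlt | rfl
  · exact AddCircle.liftIco_coe_apply ⟨ht.1, by rwa [zero_add]⟩
  · rw [AddCircle.coe_period, ← AddCircle.coe_zero (p := t), periodicCosh,
      AddCircle.liftIco_coe_apply ⟨le_rfl, by rw [zero_add]; exact Fact.out⟩,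
      zero_sub, mul_neg, cosh_neg, sub_half]

theorem fourierCoeff_periodicCosh {T : ℝ} [hT : Fact (0 < T)] {s : ℝ} (hs : s ≠ 0) (k : ℤ) :
    fourierCoeff (periodicCosh T s) k = coshFourierCoeff T s k := by
  set β : ℂ := -(2 * π * k / T) * Complex.I with hβdef
  have hβ : β ^ 2 - (s : ℂ) ^ 2 = -((s ^ 2 + (2 * π * k / T) ^ 2 : ℝ) : ℂ) := by
    push_cast
    linear_combination (2 * π * k / T : ℂ) ^ 2 * Complex.I_sq
  have hden : (s ^ 2 + (2 * π * k / T) ^ 2 : ℝ) ≠ 0 := by positivity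
  have hperiod : cexp (β * T) = 1 := by
    rw [← Complex.exp_int_mul_two_pi_mul_I (-k), hβdef]
    push_cast
    field_simp [hT.out.ne']
  rw [periodicCosh, fourierCoeff_liftIco_eq, fourierCoeffOn_eq_integral, zero_add, sub_zero,
    intervalIntegral.integral_congr
      (g := fun t : ℝ => cexp (β * t) * Complex.cosh (s * (t - T / 2))) fun t _ => by
        rw [fourier_coe_apply, smul_eq_mul, Complex.ofReal_cosh, hβdef]
        push_cast
        ring_nf,
    integral_cexp_mul_cosh (sub_ne_zero.mp (hβ ▸ neg_ne_zero.mpr (Complex.ofReal_ne_zero.mpr hden))),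
    hperiod, hβ, coshFourierCoeff, Complex.real_smul]
  push_cast
  field_simp
  ring

theorem coshFourierCoeff_neg (T s : ℝ) (k : ℤ) :
    coshFourierCoeff T s (-k) = coshFourierCoeff T s k := by
  simp only [coshFourierCoeff, Int.cast_neg, mul_neg, neg_div, neg_sq]

theorem summable_inv_add_mul_intCast_sq {a : ℝ} (ha : 0 ≤ a) {b : ℝ} (hb : b ≠ 0) :
    Summable fun k : ℤ => (a + (b * k) ^ 2)⁻¹ := by
  refine .of_norm_bounded_eventually
    ((summable_one_div_int_pow.mpr one_lt_two).mul_left (b ^ 2)⁻¹) ?_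
  filter_upwards [Filter.eventually_cofinite_ne 0] with k hk
  have hbk : 0 < (b * k) ^ 2 := by positivity
  rw [Real.norm_of_nonneg (by positivity), one_div, ← mul_inv, ← mul_pow]
  exact inv_anti₀ hbk (le_add_of_nonneg_left ha)

theorem summable_coshFourierCoeff {T : ℝ} (hT : 0 < T) (s : ℝ) :
    Summable (coshFourierCoeff T s) := by
  refine ((summable_inv_add_mul_intCast_sq (sq_nonneg s) (by positivity : 2 * π / T ≠ 0)).mul_left
    (2 * s * sinh (s * T / 2) / T)).congr fun k => ?_
  rw [coshFourierCoeff]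
  field_simp

theorem hasSum_cos_of_hasSum_fourier {T : ℝ} [Fact (0 < T)] {c : ℤ → ℝ} (hc : ∀ k, c (-k) = c k)
    {t v : ℝ} (h : HasSum (fun k : ℤ => (c k : ℂ) • fourier k (t : AddCircle T)) v) :
    HasSum (fun n : ℕ => 2 * c (n + 1) * cos (2 * π * (n + 1) * t / T)) (v - c 0) := by
  have hpair (n : ℕ) :
      (c n : ℂ) • fourier n (t : AddCircle T) + (c (-n) : ℂ) • fourier (-n) (t : AddCircle T)
        = (2 * c n * cos (2 * π * n * t / T) : ℝ) := by
    rw [hc, ← smul_add, fourier_coe_apply, fourier_coe_apply, Complex.ofReal_mul,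
      Complex.ofReal_cos, Complex.cos]
    push_cast
    ring_nf
  have hnat : HasSum (fun n : ℕ => ((2 * c n * cos (2 * π * n * t / T) : ℝ) : ℂ)) (v + c 0 : ℝ) := by
    convert h.nat_add_neg using 1
    · exact funext fun n => (hpair n).symm
    · simp
  have htail := (hasSum_nat_add_iff' 1).mpr (Complex.hasSum_ofReal.mp hnat)
  simp only [Finset.sum_range_one, Nat.cast_zero, mul_zero, zero_mul, zero_div, cos_zero,
    mul_one, Nat.cast_add, Nat.cast_one] at htail
  rwa [show v + c 0 - 2 * c 0 = v - c 0 by ring] at htail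

theorem hasSum_cosh_fourier_cos {T s t : ℝ} (hT : 0 < T) (hs : s ≠ 0) (ht : t ∈ Set.Icc 0 T) :
    HasSum (fun n : ℕ => 2 * coshFourierCoeff T s (n + 1) * cos (2 * π * (n + 1) * t / T))
      (cosh (s * (t - T / 2)) - coshFourierCoeff T s 0) := by
  have : Fact (0 < T) := ⟨hT⟩
  let F : C(AddCircle T, ℂ) := ⟨periodicCosh T s, continuous_periodicCosh T s⟩
  have hcoeff : fourierCoeff F = fun k => (coshFourierCoeff T s k : ℂ) :=
    funext (fourierCoeff_periodicCosh hs)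
  have hsum := has_pointwise_sum_fourier_series_of_summable
    (hcoeff ▸ Complex.summable_ofReal.mpr (summable_coshFourierCoeff hT s)) t
  rw [hcoeff] at hsum
  exact hasSum_cos_of_hasSum_fourier (coshFourierCoeff_neg T s) (periodicCosh_coe s ht ▸ hsum)

theorem hasSum_sin_mul_sin_div_sq_add_sq {L s x y : ℝ} (hL : 0 < L) (hs : s ≠ 0) (hy : 0 ≤ y)
    (hyx : y ≤ x) (hx : x ≤ L) :
    HasSum (fun n : ℕ => 2 / L * (sin ((n + 1) * π * x / L) * sin ((n + 1) * π * y / L)) /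
        (s ^ 2 + ((n + 1) * π / L) ^ 2))
      (sinh (s * (L - x)) * sinh (s * y) / (s * sinh (s * L))) := by
  have hsinh : sinh (s * L) ≠ 0 := sinh_ne_zero.mpr (mul_ne_zero hs hL.ne')
  have hdiff := (hasSum_cosh_fourier_cos (T := 2 * L) (by positivity) hs (t := x - y) ⟨by linarith, by linarith⟩).sub
    (hasSum_cosh_fourier_cos (T := 2 * L) (by positivity) hs (t := x + y) ⟨by linarith, by linarith⟩)
  have hcosh : cosh (s * (x - y - 2 * L / 2)) - cosh (s * (x + y - 2 * L / 2))
      = 2 * (sinh (s * (L - x)) * sinh (s * y)) := by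
    rw [show s * (x - y - 2 * L / 2) = -(s * (L - x) + s * y) by ring,
      show s * (x + y - 2 * L / 2) = s * y - s * (L - x) by ring, cosh_neg, cosh_add, cosh_sub]
    ring
  rw [sub_sub_sub_cancel_right, hcosh] at hdiff
  rw [← mul_div_mul_left (sinh (s * (L - x)) * sinh (s * y)) _ (two_ne_zero' ℝ)]
  refine (hdiff.div_const _).congr_fun fun n => ?_
  have hcos : cos (2 * π * (n + 1) * (x - y) / (2 * L)) - cos (2 * π * (n + 1) * (x + y) / (2 * L))
      = 2 * (sin ((n + 1) * π * x / L) * sin ((n + 1) * π * y / L)) := by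
    rw [show 2 * π * (n + 1) * (x - y) / (2 * L) = (n + 1) * π * x / L - (n + 1) * π * y / L by
        field_simp,
      show 2 * π * (n + 1) * (x + y) / (2 * L) = (n + 1) * π * x / L + (n + 1) * π * y / L by
        field_simp,
      cos_sub, cos_add]
    ring
  rw [← mul_sub, hcos, coshFourierCoeff, show s * (2 * L) / 2 = s * L by ring]
  push_cast
  field_simp

/-- Green function identity for Brownian motion on `(-1,1)` killed at both endpoints. -/
theorem killed_bm_green (α x y : ℝ) (hα : 0 < α) (h1 : -1 ≤ y) (h2 : y ≤ x) (h3 : x ≤ 1) :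
    Real.sinh ((1 - x) * Real.sqrt (2 * α)) * Real.sinh ((1 + y) * Real.sqrt (2 * α)) /
        (Real.sqrt (2 * α) * Real.sinh (2 * Real.sqrt (2 * α)))
    = (1 / 2) *
        ∑' n : ℕ, (1 / (α + ((n : ℝ) + 1) ^ 2 * π ^ 2 / 8)) *
          Real.sin (((n : ℝ) + 1) * π * (x + 1) / 2) *
          Real.sin (((n : ℝ) + 1) * π * (y + 1) / 2) := by
  set s := √(2 * α)
  have hs : 0 < s := sqrt_pos.mpr (by positivity)
  have hs2 : s ^ 2 = 2 * α := sq_sqrt (by positivity)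
  have hgreen := (hasSum_sin_mul_sin_div_sq_add_sq two_pos hs.ne' (x := x + 1) (y := y + 1)
    (by linarith) (by linarith) (by linarith)).mul_left 2
  rw [(hgreen.congr_fun fun n => ?_).tsum_eq]
  · rw [show s * (2 - (x + 1)) = (1 - x) * s by ring, show s * (y + 1) = (1 + y) * s by ring,
      mul_comm s 2]
    ring
  · field_simp
    rw [hs2]
    ring
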